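/- The commutator of 𝓛 with the scaling vector field R∂_R equals 2𝓛 plus multiplication by the potential U(R) = 48/(1+R²)² − 96R²/(1+R²)³: for every smooth f : (0,∞) → ℝ and every R > 0, 𝓛( S f )(R) − R · d/dR ( 𝓛f )(R) = 2 (𝓛f)(R) + U(R) f(R), where (Sf)(R) = R f'(R). -/

import Mathlib

/- STATEMENT 10: the commutator of 𝓛 = -d²/dR² + 15/(4R²) - 24/(1+R²)² with the
scaling vector field S f = R f' equals 2𝓛 plus multiplication by
U(R) = 48/(1+R²)² − 96R²/(1+R²)³:
𝓛(Sf)(R) − R (𝓛f)'(R) = 2(𝓛f)(R) + U(R) f(R). -/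

/-- The half-line Schrödinger operator `𝓛 f = -f'' + (15/(4R²) - 24/(1+R²)²) f`. -/
noncomputable def Lop (f : ℝ → ℝ) : ℝ → ℝ :=
  fun R => -(deriv (deriv f) R) + (15 / (4 * R ^ 2) - 24 / (1 + R ^ 2) ^ 2) * f R

/-- The commutator potential `U(R) = 48/(1+R²)² − 96R²/(1+R²)³`. -/
noncomputable def Upot (R : ℝ) : ℝ := 48 / (1 + R ^ 2) ^ 2 - 96 * R ^ 2 / (1 + R ^ 2) ^ 3

theorem commutator_with_scaling (f : ℝ → ℝ) (hf : ContDiffOn ℝ (⊤ : ℕ∞) f (Set.Ioi 0)) :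
    ∀ R : ℝ, 0 < R →
      Lop (fun x => x * deriv f x) R - R * deriv (Lop f) R
        = 2 * Lop f R + Upot R * f R := by
  have hsO : IsOpen (Set.Ioi (0:ℝ)) := isOpen_Ioi
  have hf1 : ContDiffOn ℝ (⊤ : ℕ∞) (deriv f) (Set.Ioi 0) := hf.deriv_of_isOpen hsO (by simp)
  have hf2 : ContDiffOn ℝ (⊤ : ℕ∞) (deriv (deriv f)) (Set.Ioi 0) := hf1.deriv_of_isOpen hsO (by simp)
  intro R hR
  have hmem : Set.Ioi (0:ℝ) ∈ nhds R := hsO.mem_nhds hR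
  -- differentiability facts at R
  have hd0 : DifferentiableAt ℝ f R := (hf.contDiffAt hmem).differentiableAt (by simp)
  have hd1 : DifferentiableAt ℝ (deriv f) R := (hf1.contDiffAt hmem).differentiableAt (by simp)
  have hd2 : DifferentiableAt ℝ (deriv (deriv f)) R := (hf2.contDiffAt hmem).differentiableAt (by simp)
  have hR2 : (4 : ℝ) * R ^ 2 ≠ 0 := by positivity
  have h1R : (1 : ℝ) + R ^ 2 ≠ 0 := by positivity
  -- second derivative of g = fun x => x * deriv f x
  have hEq : deriv (fun x => x * deriv f x) =ᶠ[nhds R]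
      fun x => deriv f x + x * deriv (deriv f) x := by
    filter_upwards [hmem] with x hx
    have hdx : DifferentiableAt ℝ (deriv f) x :=
      (hf1.contDiffAt (hsO.mem_nhds hx)).differentiableAt (by simp)
    have h1 : HasDerivAt (fun x => x * deriv f x)
        (1 * deriv f x + x * deriv (deriv f) x) x :=
      (hasDerivAt_id x).mul hdx.hasDerivAt
    rw [h1.deriv]; ring
  have hgd2 : deriv (deriv (fun x => x * deriv f x)) R
      = deriv (deriv f) R + (1 * deriv (deriv f) R + R * deriv (deriv (deriv f)) R) := by
    rw [hEq.deriv_eq]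
    exact (hd1.hasDerivAt.add ((hasDerivAt_id R).mul hd2.hasDerivAt)).deriv
  -- derivative of the potential V
  have hA : HasDerivAt (fun x : ℝ => 4 * x ^ 2) (4 * (2 * R)) R := by
    simpa using (hasDerivAt_pow 2 R).const_mul (4 : ℝ)
  have h0 : HasDerivAt (fun x : ℝ => 1 + x ^ 2) (2 * R) R := by
    simpa using (hasDerivAt_pow 2 R).const_add (1 : ℝ)
  have hB : HasDerivAt (fun x : ℝ => (1 + x ^ 2) ^ 2)
      ((2 : ℕ) * (1 + R ^ 2) ^ (2 - 1) * (2 * R)) R := h0.pow 2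
  have hV : HasDerivAt (fun x : ℝ => 15 / (4 * x ^ 2) - 24 / (1 + x ^ 2) ^ 2)
      ((0 * (4 * R ^ 2) - 15 * (4 * (2 * R))) / (4 * R ^ 2) ^ 2
        - (0 * ((1 + R ^ 2) ^ 2) - 24 * ((2 : ℕ) * (1 + R ^ 2) ^ (2 - 1) * (2 * R)))
          / ((1 + R ^ 2) ^ 2) ^ 2) R :=
    ((hasDerivAt_const R (15:ℝ)).div hA hR2).sub
      ((hasDerivAt_const R (24:ℝ)).div hB (pow_ne_zero 2 h1R))
  -- derivative of Lop f at R
  have hL : HasDerivAt (Lop f)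
      (-(deriv (deriv (deriv f)) R)
        + (((0 * (4 * R ^ 2) - 15 * (4 * (2 * R))) / (4 * R ^ 2) ^ 2
        - (0 * ((1 + R ^ 2) ^ 2) - 24 * ((2 : ℕ) * (1 + R ^ 2) ^ (2 - 1) * (2 * R)))
          / ((1 + R ^ 2) ^ 2) ^ 2) * f R
          + (15 / (4 * R ^ 2) - 24 / (1 + R ^ 2) ^ 2) * deriv f R)) R :=
    (hd2.hasDerivAt.neg).add (hV.mul hd0.hasDerivAt)
  simp only [Lop, Upot, hgd2, hL.deriv]
  have h2 : ((2 : ℕ) : ℝ) = 2 := by norm_num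
  field_simp
  ring
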